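/- For the Kneser graph K(2k+2, k) with k ≥ 2, the positive and negative square energies are both equal to (1/2)·C(2k+2, k)·C(k+2, k), where the eigenvalues of K(n,k) are μᵢ = (-1)^i · C(n-k-i, k-i) with multiplicity C(n,i) - C(n,i-1) for 0 ≤ i ≤ k. -/

import Mathlib

/-! Write `aᵢ = k + 1 - i`, so that the `i`-th eigenvalue squared is `C(aᵢ + 1, 2)²`, while the
multiplicities are consecutive differences of `C(2k+2, i)`. Summation by parts turns the total
`∑ μᵢ² mᵢ` into `∑_{i ≤ k} aᵢ³ C(2k+2, i)`, which telescopes to `(k+1)² C(2k+1, k)`, and the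
alternating sum `∑ (-1)ⁱ μᵢ² mᵢ` into `∑_{i ≤ k} (-1)ⁱ C(2k+2, i) aᵢ²(aᵢ² + 1)/2`. The latter is
half of `∑_{j ≤ 2k+2} (-1)ʲ C(2k+2, j) q(j)` for a quartic `q` symmetric about `j = k + 1` and vanishing
there; this full sum is a `(2k+2)`-nd forward difference of `q`, hence zero as soon as `4 < 2k+2`.
A total `T` and a vanishing signed sum split into `T/2` on even and `T/2` on odd indices. -/

open Finset Polynomial

theorem sum_range_mul_sub_prev {R : Type*} [CommRing R] (f w : ℕ → R) (m : ℕ) :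
    ∑ i ∈ range (m + 1), f i * (w i - if i = 0 then 0 else w (i - 1)) =
      f m * w m + ∑ i ∈ range m, (f i - f (i + 1)) * w i := by
  induction m with
  | zero => simp
  | succ m ih =>
    rw [sum_range_succ, ih, sum_range_succ, if_neg m.succ_ne_zero, Nat.add_sub_cancel]
    ring

theorem sum_filter_even_eq_and_sum_filter_not_even_eq {K : Type*} [Field K] [CharZero K]
    (s : Finset ℕ) (f : ℕ → K) {t : K}
    (hsum : ∑ i ∈ s, f i = t) (halt : ∑ i ∈ s, (-1) ^ i * f i = 0) :
    ∑ i ∈ s.filter Even, f i = 1 / 2 * t ∧ ∑ i ∈ s.filter (¬ Even ·), f i = 1 / 2 * t := by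
  rw [← sum_filter_add_sum_filter_not s Even] at hsum halt
  have heven : ∑ i ∈ s.filter Even, (-1) ^ i * f i = ∑ i ∈ s.filter Even, f i :=
    sum_congr rfl fun i hi => by rw [(mem_filter.mp hi).2.neg_one_pow, one_mul]
  have hodd : ∑ i ∈ s.filter (¬ Even ·), (-1) ^ i * f i = -∑ i ∈ s.filter (¬ Even ·), f i := by
    rw [← sum_neg_distrib]
    exact sum_congr rfl fun i hi => by
      rw [(Nat.not_even_iff_odd.mp (mem_filter.mp hi).2).neg_one_pow, neg_one_mul]
  rw [heven, hodd] at halt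
  constructor
  · linear_combination (hsum + halt) / 2
  · linear_combination (hsum - halt) / 2

theorem Polynomial.sum_range_neg_one_pow_mul_choose_mul_eval_eq_zero {R : Type*} [CommRing R]
    (P : R[X]) {n : ℕ} (hP : P.natDegree < n) :
    ∑ j ∈ range (n + 1), (-1) ^ j * (n.choose j : R) * P.eval (j : R) = 0 := by
  have h := congr_fun (fwdDiff_iter_eq_zero_of_degree_lt hP) 0
  simp only [fwdDiff_iter_eq_sum_shift, zero_add, nsmul_eq_mul, mul_one, zsmul_eq_mul,
    Int.cast_mul, Int.cast_pow, Int.cast_neg, Int.cast_one, Int.cast_natCast, Pi.zero_apply] at h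
  calc _ = (-1) ^ n * ∑ j ∈ range (n + 1), (-1) ^ (n - j) * (n.choose j : R) * P.eval (j : R) := by
        rw [mul_sum]
        refine sum_congr rfl fun j hj => ?_
        rw [← mul_assoc, ← mul_assoc, ← pow_add,
          show n + (n - j) = j + 2 * (n - j) by grind, pow_add, pow_mul]
        simp
    _ = 0 := by rw [h, mul_zero]

theorem sum_range_two_mul_add_one_eq_of_symm {M : Type*} [AddCommMonoid M] (F : ℕ → M) (m : ℕ)
    (hF : ∀ j ≤ 2 * m, F (2 * m - j) = F j) :
    ∑ j ∈ range (2 * m + 1), F j = 2 • ∑ j ∈ range m, F j + F m := by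
  have hupper : ∑ j ∈ range m, F (m + (j + 1)) = ∑ j ∈ range m, F j := by
    rw [← sum_range_reflect]
    refine sum_congr rfl fun j hj => ?_
    rw [← hF j (by grind)]
    congr 1
    grind
  rw [two_mul, add_assoc, sum_range_add, sum_range_succ', hupper, two_nsmul, add_zero]
  abel

theorem sum_range_cube_mul_choose (k : ℕ) {m : ℕ} (hm : m ≤ 2 * k) :
    ∑ j ∈ range (m + 1), ((k : ℚ) + 1 - j) ^ 3 * ((2 * k + 2).choose j : ℚ) =
      ((k : ℚ) + 1) * ((m : ℚ) ^ 2 - (2 * k + 1) * m + ((k : ℚ) + 1) ^ 2) *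
        ((2 * k + 1).choose m : ℚ) := by
  induction m with
  | zero => simp only [zero_add, sum_range_one, Nat.choose_zero_right]; push_cast; ring
  | succ m ih =>
    have hstep : ((2 * k + 1).choose (m + 1) : ℚ) * (m + 1) =
        ((2 * k + 1).choose m : ℚ) * (2 * k + 1 - m) := by
      have := Nat.choose_succ_right_eq (2 * k + 1) m
      qify [show m ≤ 2 * k + 1 by omega] at this
      exact this
    rw [sum_range_succ, ih (by omega), show 2 * k + 2 = (2 * k + 1) + 1 by ring,
      Nat.choose_succ_succ', Nat.cast_add]
    refine mul_left_cancel₀ (m.cast_add_one_ne_zero (R := ℚ)) ?_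
    push_cast
    linear_combination (((k : ℚ) - m) ^ 3 - ((k : ℚ) + 1) *
      (((m : ℚ) + 1) ^ 2 - (2 * (k : ℚ) + 1) * ((m : ℚ) + 1) + ((k : ℚ) + 1) ^ 2)) * hstep

theorem add_one_sq_mul_choose_eq_choose_mul_choose (k : ℕ) :
    ((k : ℚ) + 1) ^ 2 * (2 * k + 1).choose k = (2 * k + 2).choose k * (k + 2).choose k := by
  have hsucc := Nat.add_one_mul_choose_eq (2 * k + 1) k
  have hright := Nat.choose_succ_right_eq (2 * k + 2) k
  qify [show k ≤ 2 * k + 2 by omega] at hsucc hright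
  rw [show (k + 2).choose k = (k + 2).choose 2 from Nat.choose_symm_add, Nat.cast_choose_two]
  push_cast at hsucc hright ⊢
  linear_combination (((k : ℚ) + 1) / 2) * hsucc + (((k : ℚ) + 1) / 2) * hright

theorem cast_choose_add_two_sub {k i : ℕ} (h : i ≤ k) :
    ((k + 2 - i).choose (k - i) : ℚ) = ((k : ℚ) + 2 - i) * ((k : ℚ) + 1 - i) / 2 := by
  rw [show k + 2 - i = (k - i) + 2 by omega, Nat.choose_symm_add, Nat.cast_choose_two]
  push_cast [h]
  ring

theorem sum_range_neg_one_pow_mul_choose_mul_sq_mul_sq_add_one {k : ℕ} (hk : 2 ≤ k) :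
    ∑ i ∈ range (k + 1), (-1) ^ i * ((2 * k + 2).choose i : ℚ) *
      (((k : ℚ) + 1 - i) ^ 2 * (((k : ℚ) + 1 - i) ^ 2 + 1) / 2) = 0 := by
  set Q : ℚ[X] := C (1 / 2) * (C ((k : ℚ) + 1) - X) ^ 2 * ((C ((k : ℚ) + 1) - X) ^ 2 + 1)
  set F : ℕ → ℚ := fun j => (-1) ^ j * ((2 * (k + 1)).choose j : ℚ) * Q.eval (j : ℚ)
  have hdeg : Q.natDegree < 2 * (k + 1) :=
    (show Q.natDegree ≤ 4 by simp only [Q]; compute_degree!).trans_lt (by omega)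
  have hsymm : ∀ j ≤ 2 * (k + 1), F (2 * (k + 1) - j) = F j := by
    intro j hj
    have hsign : (-1 : ℚ) ^ (2 * (k + 1) - j) = (-1) ^ j := by
      rw [neg_one_pow_eq_pow_mod_two, show (2 * (k + 1) - j) % 2 = j % 2 by omega,
        ← neg_one_pow_eq_pow_mod_two]
    simp only [F, Q, hsign, Nat.choose_symm hj, Nat.cast_sub hj, eval_mul, eval_pow, eval_sub,
      eval_add, eval_C, eval_X, eval_one]
    push_cast
    ring
  have hmid : F (k + 1) = 0 := by simp [F, Q]
  have hfull := sum_range_two_mul_add_one_eq_of_symm F (k + 1) hsymm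
  rw [Q.sum_range_neg_one_pow_mul_choose_mul_eval_eq_zero hdeg, hmid, add_zero, eq_comm,
    smul_eq_zero] at hfull
  refine .trans (sum_congr rfl fun i _ => ?_) (hfull.resolve_left two_ne_zero)
  simp only [F, Q, eval_mul, eval_pow, eval_sub, eval_add, eval_C, eval_X, mul_add_one]
  ring

def kneserMultiplicity (n i : ℕ) : ℚ :=
  (n.choose i : ℚ) - if i = 0 then 0 else (n.choose (i - 1) : ℚ)

theorem sum_sq_choose_mul_kneserMultiplicity (k : ℕ) :
    ∑ i ∈ range (k + 1), ((k + 2 - i).choose (k - i) : ℚ) ^ 2 * kneserMultiplicity (2 * k + 2) i =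
      (2 * k + 2).choose k * (k + 2).choose k := by
  set S : ℕ → ℚ := fun i => (((k : ℚ) + 2 - i) * ((k : ℚ) + 1 - i) / 2) ^ 2
  calc _ = ∑ i ∈ range (k + 1), S i * kneserMultiplicity (2 * k + 2) i :=
        sum_congr rfl fun i hi => by rw [cast_choose_add_two_sub (by grind)]
    _ = S k * (2 * k + 2).choose k + ∑ i ∈ range k, (S i - S (i + 1)) * (2 * k + 2).choose i :=
        sum_range_mul_sub_prev S _ k
    _ = ∑ i ∈ range (k + 1), ((k : ℚ) + 1 - i) ^ 3 * (2 * k + 2).choose i := by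
        rw [sum_range_succ, add_comm]
        congr 1
        · exact sum_congr rfl fun i _ => by simp only [S]; push_cast; ring
        · simp only [S]; ring
    _ = ((k : ℚ) + 1) ^ 2 * (2 * k + 1).choose k := by
        rw [sum_range_cube_mul_choose k (by omega)]; ring
    _ = _ := add_one_sq_mul_choose_eq_choose_mul_choose k

theorem sum_neg_one_pow_mul_sq_choose_mul_kneserMultiplicity {k : ℕ} (hk : 2 ≤ k) :
    ∑ i ∈ range (k + 1),
      (-1) ^ i * (((k + 2 - i).choose (k - i) : ℚ) ^ 2 * kneserMultiplicity (2 * k + 2) i) = 0 := by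
  set S : ℕ → ℚ := fun i => (-1) ^ i * (((k : ℚ) + 2 - i) * ((k : ℚ) + 1 - i) / 2) ^ 2
  calc _ = ∑ i ∈ range (k + 1), S i * kneserMultiplicity (2 * k + 2) i :=
        sum_congr rfl fun i hi => by rw [cast_choose_add_two_sub (by grind), ← mul_assoc]
    _ = S k * (2 * k + 2).choose k + ∑ i ∈ range k, (S i - S (i + 1)) * (2 * k + 2).choose i :=
        sum_range_mul_sub_prev S _ k
    _ = ∑ i ∈ range (k + 1), (-1) ^ i * ((2 * k + 2).choose i : ℚ) *
          (((k : ℚ) + 1 - i) ^ 2 * (((k : ℚ) + 1 - i) ^ 2 + 1) / 2) := by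
        rw [sum_range_succ, add_comm]
        congr 1
        · exact sum_congr rfl fun i _ => by simp only [S]; push_cast; ring
        · simp only [S]; ring
    _ = 0 := sum_range_neg_one_pow_mul_choose_mul_sq_mul_sq_add_one hk

/-- For the Kneser graph `K(2k+2, k)` with `k ≥ 2`, whose eigenvalues are
`μᵢ = (-1)^i C(k+2-i, k-i)` with multiplicity `C(2k+2,i) - C(2k+2,i-1)`
(with `C(2k+2,-1) = 0`), the positive square energy (sum over even `i`) and the
negative square energy (sum over odd `i`) are both equal to
`(1/2) C(2k+2,k) C(k+2,k)`. -/
theorem stmt19 (k : ℕ) (hk : 2 ≤ k) :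
    (∑ i ∈ (Finset.range (k + 1)).filter (fun i => Even i),
        ((k + 2 - i).choose (k - i) : ℚ) ^ 2 *
          (((2 * k + 2).choose i : ℚ) -
            if i = 0 then 0 else ((2 * k + 2).choose (i - 1) : ℚ))) =
      (1 / 2) * ((2 * k + 2).choose k : ℚ) * ((k + 2).choose k : ℚ) ∧
    (∑ i ∈ (Finset.range (k + 1)).filter (fun i => ¬ Even i),
        ((k + 2 - i).choose (k - i) : ℚ) ^ 2 *
          (((2 * k + 2).choose i : ℚ) -
            if i = 0 then 0 else ((2 * k + 2).choose (i - 1) : ℚ))) =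
      (1 / 2) * ((2 * k + 2).choose k : ℚ) * ((k + 2).choose k : ℚ) := by
  rw [mul_assoc]
  exact sum_filter_even_eq_and_sum_filter_not_even_eq _ _
    (sum_sq_choose_mul_kneserMultiplicity k)
    (sum_neg_one_pow_mul_sq_choose_mul_kneserMultiplicity hk)
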